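/- The linear system {Qx ≤ c̃, x ≥ 0} is totally dual integral, where Q is the di-circuits versus nodes incidence matrix of a digraph D and c̃ is the vector assigning to each di-circuit K the total c-cost of its edges, for any nonnegative integer cost c on edges. -/

import Mathlib

open scoped BigOperators

noncomputable section

variable {V : Type*}

/-- No edge of `A` leaves `Z`. -/
def NoLeaving (A : Set (V × V)) (Z : Set V) : Prop :=
  ∀ e ∈ A, e.1 ∈ Z → e.2 ∈ Z

/-- The set of edges of `A` entering `Z`. -/
def dicutOf (A : Set (V × V)) (Z : Set V) : Set (V × V) :=
  {e ∈ A | e.2 ∈ Z ∧ e.1 ∉ Z}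

/-- `B` is a directed cut of the digraph with edge set `A`. -/
def IsDicut (A B : Set (V × V)) : Prop :=
  ∃ Z : Set V, NoLeaving A Z ∧ B = dicutOf A Z

/-- `F` is the union of pairwise disjoint dicuts of `A`. -/
def IsDisjointDicutUnion (A F : Set (V × V)) : Prop :=
  ∃ 𝓑 : Set (Set (V × V)), (∀ B ∈ 𝓑, IsDicut A B) ∧
    𝓑.Pairwise Disjoint ∧ F = ⋃₀ 𝓑

/-- The digraph obtained from `A` by reversing the edges of `F`. -/
def rev (A F : Set (V × V)) : Set (V × V) :=
  (A \ F) ∪ Prod.swap '' F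

/-- `v` is a sink of the digraph `A`: no edge leaves `v`. -/
def IsSinkIn (A : Set (V × V)) (v : V) : Prop := ∀ u, (v, u) ∉ A

/-- `S` is a stable set of the digraph `A`. -/
def Stable (A : Set (V × V)) (S : Set V) : Prop :=
  ∀ u ∈ S, ∀ v ∈ S, (u, v) ∉ A

/-- `S` is sink-stable: there are pairwise disjoint dicuts whose reorientation
turns every element of `S` into a sink. -/
def SinkStable (A : Set (V × V)) (S : Set V) : Prop :=
  ∃ F, IsDisjointDicutUnion A F ∧ ∀ s ∈ S, IsSinkIn (rev A F) s

/-- `S` is `F`-stable : sink-stable in the digraph where `F` is reversed. -/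
def FStable (A F : Set (V × V)) (S : Set V) : Prop :=
  SinkStable (rev A F) S

/-- A circuit of the digraph `A`: a cycle of the underlying undirected graph,
with a fixed traversal direction; `dir i = true` iff the `i`-th edge is a
forward edge. -/
structure Circuit (A : Set (V × V)) where
  n : ℕ
  hn : 2 ≤ n
  f : ZMod n → V
  inj : Function.Injective f
  dir : ZMod n → Bool
  mem : ∀ i : ZMod n, (if dir i then (f i, f (i + 1)) else (f (i + 1), f i)) ∈ A
  edge_inj : Function.Injective
    (fun i : ZMod n => if dir i then (f i, f (i + 1)) else (f (i + 1), f i))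

namespace Circuit

variable {A : Set (V × V)}

/-- The edge of the digraph used at step `i` of the circuit. -/
def edge (C : Circuit A) (i : ZMod C.n) : V × V :=
  if C.dir i then (C.f i, C.f (i + 1)) else (C.f (i + 1), C.f i)

/-- The node set of the circuit. -/
def verts (C : Circuit A) : Set V := Set.range C.f

/-- The number of forward edges of `C` lying in `F`. -/
def fwdCount (C : Circuit A) (F : Set (V × V)) : ℕ :=
  {i : ZMod C.n | C.dir i = true ∧ C.edge i ∈ F}.ncard

/-- The number of backward edges of `C` lying in `F`. -/
def bwdCount (C : Circuit A) (F : Set (V × V)) : ℕ :=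
  {i : ZMod C.n | C.dir i = false ∧ C.edge i ∈ F}.ncard

/-- The number of forward edges of `C`. -/
def fwd (C : Circuit A) : ℕ := {i : ZMod C.n | C.dir i = true}.ncard

/-- The number of backward edges of `C`. -/
def bwd (C : Circuit A) : ℕ := {i : ZMod C.n | C.dir i = false}.ncard

/-- `η(C)`, the minimum of the numbers of forward and backward edges. -/
def eta (C : Circuit A) : ℕ := min C.fwd C.bwd

end Circuit

/-- A directed circuit (di-circuit) of the digraph `A`. -/
structure DiCircuit (A : Set (V × V)) where
  n : ℕ
  hn : 2 ≤ n
  f : ZMod n → V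
  inj : Function.Injective f
  mem : ∀ i : ZMod n, (f i, f (i + 1)) ∈ A

namespace DiCircuit

variable {A : Set (V × V)}

/-- The node set of the di-circuit. -/
def verts (K : DiCircuit A) : Set V := Set.range K.f

/-- The edge set of the di-circuit. -/
def edges (K : DiCircuit A) : Set (V × V) :=
  {e | ∃ i : ZMod K.n, e = (K.f i, K.f (i + 1))}

/-- The total `c`-cost of the edges of the di-circuit. -/
def cost (K : DiCircuit A) (c : V × V → ℕ) : ℕ :=
  ∑ i ∈ Finset.range K.n, c (K.f (i : ZMod K.n), K.f ((i : ZMod K.n) + 1))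

/-- The sum of `z` over the nodes of the di-circuit. -/
def vsum (K : DiCircuit A) (z : V → ℕ) : ℕ :=
  ∑ i ∈ Finset.range K.n, z (K.f (i : ZMod K.n))

end DiCircuit

/-- The digraph `A` is acyclic: it has no closed directed walk. -/
def Acyclic (A : Set (V × V)) : Prop :=
  ∀ (p : ℕ → V) (m : ℕ), 0 < m → (∀ i < m, (p i, p (i + 1)) ∈ A) → p m ≠ p 0

/-- The digraph `A` is strongly connected. -/
def StronglyConnected (A : Set (V × V)) : Prop :=
  ∀ u v : V, Relation.ReflTransGen (fun x y => (x, y) ∈ A) u v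

/-- `F` is flat: every cyclic edge of `A` lies on a di-circuit containing
exactly one element of `F`. -/
def Flat (A F : Set (V × V)) : Prop :=
  ∀ e ∈ A, (∃ K : DiCircuit A, e ∈ K.edges) →
    ∃ K : DiCircuit A, e ∈ K.edges ∧ (K.edges ∩ F).ncard = 1

/-- `F` is a transversal of di-circuits: it meets every di-circuit. -/
def Transversal (A F : Set (V × V)) : Prop :=
  ∀ K : DiCircuit A, (K.edges ∩ F).Nonempty

attribute [local instance] Classical.propDecidable
namespace TDIcore
variable {E W : Type*} [Fintype E]
def flowTo (t : E → W) (z : E → ℚ) (v : W) : ℚ := ∑ e, if t e = v then z e else 0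
def IsCirc (s t : E → W) (z : E → ℚ) : Prop := ∀ v, flowTo t z v = flowTo s z v

lemma sum_Ico_tele (Φ : ℕ → ℚ) {i j : ℕ} (h : i ≤ j) :
    ∑ n ∈ Finset.Ico i j, (Φ (n + 1) - Φ n) = Φ j - Φ i := by
  induction j with
  | zero => interval_cases i; simp
  | succ j ih =>
    rcases Nat.lt_or_ge i (j+1) with hij | hij
    · have hij' : i ≤ j := Nat.lt_succ_iff.mp hij
      rw [Finset.sum_Ico_succ_top hij', ih hij']; ring
    · have : i = j + 1 := le_antisymm h hij
      subst this; simp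

lemma exists_first_repeat {α : Type*} (p : ℕ → α) (hfin : (Set.range p).Finite) :
    ∃ i j, i < j ∧ p i = p j ∧ ∀ a b, a < b → b < j → p a ≠ p b := by
  have hninj : ¬ Function.Injective p := fun hinj =>
    Set.infinite_range_of_injective hinj hfin
  have hex : ∃ j, ∃ i, i < j ∧ p i = p j := by
    simp only [Function.Injective, not_forall] at hninj
    obtain ⟨a, b, hab, hne⟩ := hninj
    rcases Nat.lt_or_ge a b with h | h
    · exact ⟨b, a, h, hab⟩
    · exact ⟨a, b, lt_of_le_of_ne h (Ne.symm hne), hab.symm⟩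
  classical
  obtain ⟨i, hij, hpi⟩ := Nat.find_spec hex
  exact ⟨i, Nat.find hex, hij, hpi, fun a b hab hbj hpab =>
    Nat.find_min hex hbj ⟨a, hab, hpab⟩⟩

lemma flowTo_addf (t : E → W) (z z' : E → ℚ) (v : W) :
    flowTo t (fun e => z e + z' e) v = flowTo t z v + flowTo t z' v := by
  rw [flowTo, flowTo, flowTo, ← Finset.sum_add_distrib]
  refine Finset.sum_congr rfl fun e _ => by by_cases h : t e = v <;> simp [h]

lemma flowTo_subf (t : E → W) (z z' : E → ℚ) (v : W) :
    flowTo t (fun e => z e - z' e) v = flowTo t z v - flowTo t z' v := by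
  rw [flowTo, flowTo, flowTo, ← Finset.sum_sub_distrib]
  refine Finset.sum_congr rfl fun e _ => by by_cases h : t e = v <;> simp [h]

lemma IsCirc.subf {s t : E → W} {z z' : E → ℚ} (h : IsCirc s t z) (h' : IsCirc s t z') :
    IsCirc s t (fun e => z e - z' e) := fun v => by
  rw [flowTo_subf, flowTo_subf, h v, h' v]

lemma IsCirc.addf {s t : E → W} {z z' : E → ℚ} (h : IsCirc s t z) (h' : IsCirc s t z') :
    IsCirc s t (fun e => z e + z' e) := fun v => by
  rw [flowTo_addf, flowTo_addf, h v, h' v]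

def SignCompat (d : E → ℚ) (χ : E → ℤ) : Prop :=
  ∀ e, χ e = 0 ∨ (χ e = 1 ∧ 0 < d e) ∨ (χ e = -1 ∧ d e < 0)

lemma exists_sign_cycle (s t : E → W) (d : E → ℚ) (hc : IsCirc s t d)
    (e₀ : E) (h0 : d e₀ ≠ 0) :
    ∃ χ : E → ℤ, IsCirc s t (fun e => (χ e : ℚ)) ∧ SignCompat d χ ∧ ∃ e, χ e ≠ 0 := by
  set In : W → Prop := fun u => ∃ e, (0 < d e ∧ t e = u) ∨ (d e < 0 ∧ s e = u) with hIn
  have key : ∀ u, In u → ∃ e, (0 < d e ∧ s e = u) ∨ (d e < 0 ∧ t e = u) := by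
    intro u hu
    by_contra hno
    push_neg at hno
    have h1 : ∀ e, s e = u → d e ≤ 0 := fun e he => by
      by_contra h; push_neg at h; exact absurd he ((hno e).1 h)
    have h2 : ∀ e, t e = u → 0 ≤ d e := fun e he => by
      by_contra h; push_neg at h; exact absurd he ((hno e).2 h)
    have hL : (0:ℚ) ≤ flowTo t d u :=
      Finset.sum_nonneg fun e _ => by by_cases h : t e = u <;> simp [h, h2 e]
    have hR : flowTo s d u ≤ 0 :=
      Finset.sum_nonpos fun e _ => by by_cases h : s e = u <;> simp [h, h1 e]
    obtain ⟨e, he⟩ := hu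
    have hcu := hc u
    rcases he with ⟨hpos, hte⟩ | ⟨hneg, hse⟩
    · have h3 : d e ≤ flowTo t d u := by
        have h5 := Finset.single_le_sum (f := fun e => if t e = u then d e else 0)
          (fun e _ => by by_cases h : t e = u <;> simp [h, h2 e]) (Finset.mem_univ e)
        simp only [if_pos hte] at h5
        exact h5
      linarith
    · have h3 : flowTo s d u ≤ d e := by
        have h5 := Finset.single_le_sum (f := fun e => if s e = u then -(d e) else 0)
          (fun e _ => by by_cases h : s e = u <;> simp [h]; linarith [h1 e h]) (Finset.mem_univ e)
        have h4 : -(flowTo s d u) = ∑ e, if s e = u then -(d e) else 0 := by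
          rw [flowTo, ← Finset.sum_neg_distrib]
          refine Finset.sum_congr rfl fun e _ => by by_cases h : s e = u <;> simp [h]
        simp only [if_pos hse] at h5
        linarith [h4 ▸ h5]
      linarith
  -- choose an outgoing residual edge for every vertex with an incoming one
  have key' : ∀ u : W, ∃ e : E, In u → ((0 < d e ∧ s e = u) ∨ (d e < 0 ∧ t e = u)) := by
    intro u
    by_cases h : In u
    · obtain ⟨e, he⟩ := key u h; exact ⟨e, fun _ => he⟩
    · exact ⟨e₀, fun h' => absurd h' h⟩
  choose g hg using key'
  set nxt : E → W := fun e => if 0 < d e then t e else s e with hnxt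
  set p : ℕ → W := fun n => Nat.rec (nxt e₀) (fun _ u => nxt (g u)) n with hp
  have hp0 : p 0 = nxt e₀ := rfl
  have hpsucc : ∀ n, p (n+1) = nxt (g (p n)) := fun n => rfl
  have hInvar : ∀ n, In (p n) := by
    intro n
    induction n with
    | zero =>
      by_cases h : 0 < d e₀
      · exact ⟨e₀, Or.inl ⟨h, by simp [hp0, hnxt, h]⟩⟩
      · have hneg : d e₀ < 0 := lt_of_le_of_ne (not_lt.mp h) h0
        exact ⟨e₀, Or.inr ⟨hneg, by simp [hp0, hnxt, h]⟩⟩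
    | succ n ih =>
      rcases hg (p n) ih with ⟨hpos, _⟩ | ⟨hneg, _⟩
      · exact ⟨g (p n), Or.inl ⟨hpos, by simp [hpsucc n, hnxt, hpos]⟩⟩
      · exact ⟨g (p n), Or.inr ⟨hneg, by simp [hpsucc n, hnxt, not_lt.mpr hneg.le]⟩⟩
  have hstep : ∀ n, (0 < d (g (p n)) ∧ s (g (p n)) = p n ∧ t (g (p n)) = p (n+1)) ∨
      (d (g (p n)) < 0 ∧ t (g (p n)) = p n ∧ s (g (p n)) = p (n+1)) := by
    intro n
    rcases hg (p n) (hInvar n) with ⟨hpos, hse⟩ | ⟨hneg, hte⟩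
    · exact Or.inl ⟨hpos, hse, by simp [hpsucc n, hnxt, hpos]⟩
    · exact Or.inr ⟨hneg, hte, by simp [hpsucc n, hnxt, not_lt.mpr hneg.le]⟩
  have hfin : (Set.range p).Finite := by
    refine Set.Finite.subset (Set.finite_range nxt) ?_
    rintro _ ⟨n, rfl⟩
    cases n with
    | zero => exact ⟨e₀, rfl⟩
    | succ n => exact ⟨g (p n), rfl⟩
  obtain ⟨i, j, hij, hpij, hinj⟩ := exists_first_repeat p hfin
  set σ : ℕ → ℤ := fun n => if 0 < d (g (p n)) then 1 else -1 with hσ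
  set χ : E → ℤ := fun e => ∑ n ∈ Finset.Ico i j, if g (p n) = e then σ n else 0 with hχ
  -- distinctness of traversed edges
  have hedg : ∀ m n, i ≤ m → m < n → n < j → g (p m) ≠ g (p n) := by
    intro m n him hmn hnj heq
    have hpmn : p m ≠ p n := hinj m n hmn hnj
    rcases hstep m with ⟨hm1, hm2, _⟩ | ⟨hm1, hm2, _⟩ <;>
      rcases hstep n with ⟨hn1, hn2, _⟩ | ⟨hn1, hn2, _⟩
    · exact hpmn (by rw [← hm2, heq, hn2])
    · exact absurd (heq ▸ hm1) (not_lt.mpr hn1.le)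
    · exact absurd (heq ▸ hm1) (not_lt.mpr hn1.le)
    · exact hpmn (by rw [← hm2, heq, hn2])
  have hχval : ∀ n ∈ Finset.Ico i j, χ (g (p n)) = σ n := by
    intro n hn
    rw [hχ]
    refine Finset.sum_eq_single n (fun m hm hmn => ?_) (fun h => absurd hn h) |>.trans ?_
    · rw [if_neg]
      simp only [Finset.mem_Ico] at hm hn
      rcases Nat.lt_or_ge m n with h | h
      · exact hedg m n hm.1 h hn.2
      · exact fun h' => (hedg n m hn.1 (lt_of_le_of_ne h (Ne.symm hmn)) hm.2) h'.symm
    · rw [if_pos rfl]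
  have hsgn : ∀ n, 0 < d (g (p n)) ∨ d (g (p n)) < 0 := by
    intro n
    rcases hstep n with ⟨h, _⟩ | ⟨h, _⟩
    exacts [Or.inl h, Or.inr h]
  refine ⟨χ, ?_, ?_, ?_⟩
  · -- circulation
    intro v
    have hexpand : ∀ (q : E → W), flowTo q (fun e => (χ e : ℚ)) v =
        ∑ n ∈ Finset.Ico i j, (if q (g (p n)) = v then (σ n : ℚ) else 0) := by
      intro q
      rw [flowTo]
      have h1 : ∀ e : E, (if q e = v then ((χ e : ℚ)) else 0) =
          ∑ n ∈ Finset.Ico i j, (if g (p n) = e then (if q e = v then (σ n : ℚ) else 0) else 0) := by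
        intro e
        by_cases h : q e = v
        · simp only [if_pos h, hχ]
          push_cast
          rfl
        · simp [if_neg h]
      rw [Finset.sum_congr rfl fun e _ => h1 e, Finset.sum_comm]
      refine Finset.sum_congr rfl fun n _ => ?_
      rw [Finset.sum_ite_eq Finset.univ (g (p n)) (fun e => if q e = v then (σ n : ℚ) else 0)]
      simp
    rw [hexpand t, hexpand s, ← sub_eq_zero, ← Finset.sum_sub_distrib]
    have hterm : ∀ n ∈ Finset.Ico i j,
        ((if t (g (p n)) = v then (σ n : ℚ) else 0) - (if s (g (p n)) = v then (σ n : ℚ) else 0)) =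
        ((if p (n+1) = v then (1:ℚ) else 0) - (if p n = v then (1:ℚ) else 0)) := by
      intro n _
      rcases hstep n with ⟨h1, h2, h3⟩ | ⟨h1, h2, h3⟩
      · rw [hσ]; simp only [if_pos h1, h2, h3]; push_cast; ring_nf
      · rw [hσ]; simp only [if_neg (not_lt.mpr h1.le), h2, h3]
        by_cases ha : p n = v <;> by_cases hb : p (n+1) = v <;> simp [ha, hb]
    rw [Finset.sum_congr rfl hterm,
      sum_Ico_tele (fun n => if p n = v then (1:ℚ) else 0) hij.le, hpij]
    ring
  · -- sign compatibility
    intro e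
    by_cases he : ∃ n ∈ Finset.Ico i j, g (p n) = e
    · obtain ⟨n, hn, rfl⟩ := he
      rcases hsgn n with h | h
      · exact Or.inr (Or.inl ⟨by rw [hχval n hn, hσ]; simp [h], h⟩)
      · exact Or.inr (Or.inr ⟨by rw [hχval n hn, hσ]; simp [not_lt.mpr h.le], h⟩)
    · push_neg at he
      left
      rw [hχ]
      exact Finset.sum_eq_zero fun n hn => if_neg (he n hn)
  · -- nonzero
    refine ⟨g (p i), ?_⟩
    have hi : i ∈ Finset.Ico i j := Finset.mem_Ico.mpr ⟨le_refl i, hij⟩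
    rw [hχval i hi, hσ]
    by_cases h : 0 < d (g (p i)) <;> simp [h]

/-- cost of a rational flow -/
def costQ (γ : E → ℕ) (z : E → ℚ) : ℚ := ∑ e, (γ e : ℚ) * z e

lemma exists_neg_cycle (s t : E → W) (γ : E → ℕ) :
    ∀ (N : ℕ) (d : E → ℚ), (Finset.univ.filter fun e => d e ≠ 0).card ≤ N →
    IsCirc s t d → costQ γ d < 0 →
    ∃ χ : E → ℤ, IsCirc s t (fun e => (χ e : ℚ)) ∧ SignCompat d χ ∧
      costQ γ (fun e => (χ e : ℚ)) < 0 := by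
  intro N
  induction N with
  | zero =>
    intro d hcard hcirc hneg
    exfalso
    have : ∀ e, d e = 0 := by
      intro e
      by_contra h
      have : (Finset.univ.filter fun e => d e ≠ 0).Nonempty := ⟨e, by simp [h]⟩
      simp [Finset.card_eq_zero.mp (Nat.le_zero.mp hcard)] at this
    have : costQ γ d = 0 := by
      rw [costQ]; exact Finset.sum_eq_zero fun e _ => by rw [this e, mul_zero]
    linarith
  | succ N ih =>
    intro d hcard hcirc hneg
    have hd0 : ∃ e₀, d e₀ ≠ 0 := by
      by_contra h
      push_neg at h
      have : costQ γ d = 0 := by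
        rw [costQ]; exact Finset.sum_eq_zero fun e _ => by rw [h e, mul_zero]
      linarith
    obtain ⟨e₀, he₀⟩ := hd0
    obtain ⟨χ₀, hχ₀circ, hχ₀sgn, hχ₀ne⟩ := exists_sign_cycle s t d hcirc e₀ he₀
    by_cases hcost : costQ γ (fun e => (χ₀ e : ℚ)) < 0
    · exact ⟨χ₀, hχ₀circ, hχ₀sgn, hcost⟩
    push_neg at hcost
    -- subtract λ·χ₀ from d
    set S : Finset E := Finset.univ.filter fun e => χ₀ e ≠ 0 with hS
    have hSne : S.Nonempty := by
      obtain ⟨e, he⟩ := hχ₀ne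
      exact ⟨e, by simp [hS, he]⟩
    set lam : ℚ := Finset.min' (S.image fun e => |d e|) (Finset.Nonempty.image hSne fun e => |d e|) with hlam
    have hmem := Finset.min'_mem (S.image fun e => |d e|) (Finset.Nonempty.image hSne fun e => |d e|)
    rw [← hlam] at hmem
    obtain ⟨em, hem, hemval⟩ := Finset.mem_image.mp hmem
    have hlam_le : ∀ e ∈ S, lam ≤ |d e| := fun e he =>
      Finset.min'_le _ _ (Finset.mem_image_of_mem _ he)
    have hdz : ∀ e, χ₀ e ≠ 0 → d e ≠ 0 := by
      intro e he
      rcases hχ₀sgn e with h | ⟨_, h⟩ | ⟨_, h⟩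
      · exact absurd h he
      · exact ne_of_gt h
      · exact ne_of_lt h
    have hlampos : 0 < lam := by
      rw [← hemval]
      simp only [hS, Finset.mem_filter] at hem
      exact abs_pos.mpr (hdz em hem.2)
    set d' : E → ℚ := fun e => d e - lam * (χ₀ e : ℚ) with hd'
    have hsub : ∀ e, χ₀ e ≠ 0 → (0 < d e → 0 ≤ d' e ∧ d' e < d e) ∧
        (d e < 0 → d e < d' e ∧ d' e ≤ 0) := by
      intro e he
      rcases hχ₀sgn e with h | ⟨h1, h2⟩ | ⟨h1, h2⟩
      · exact absurd h he
      · constructor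
        · intro hpos
          have := hlam_le e (by simp [hS, he])
          rw [abs_of_pos hpos] at this
          constructor <;> [skip; skip] <;> simp [hd', h1] <;> linarith
        · intro hneg; linarith
      · constructor
        · intro hpos; linarith
        · intro hneg
          have := hlam_le e (by simp [hS, he])
          rw [abs_of_neg hneg] at this
          constructor <;> simp [hd', h1] <;> linarith
    -- support strictly decreases
    have hsupp : ∀ e, d' e ≠ 0 → d e ≠ 0 := by
      intro e he
      by_cases h : χ₀ e = 0
      · simpa [hd', h] using he
      · exact hdz e h
    have hem0 : d' em = 0 := by
      simp only [hS, Finset.mem_filter] at hem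
      rcases hχ₀sgn em with h | ⟨h1, h2⟩ | ⟨h1, h2⟩
      · exact absurd h hem.2
      · rw [abs_of_pos h2] at hemval
        simp only [hd', h1]
        push_cast
        linarith
      · rw [abs_of_neg h2] at hemval
        simp only [hd', h1]
        push_cast
        linarith
    have hem1 : d em ≠ 0 := by
      simp only [hS, Finset.mem_filter] at hem
      exact hdz em hem.2
    have hcard' : (Finset.univ.filter fun e => d' e ≠ 0).card ≤ N := by
      have hss : (Finset.univ.filter fun e => d' e ≠ 0) ⊂
          (Finset.univ.filter fun e => d e ≠ 0) := by
        constructor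
        · intro e he
          simp only [Finset.mem_filter, Finset.mem_univ, true_and] at he ⊢
          exact hsupp e he
        · intro hsub2
          have := hsub2 (by simp [hem1] : em ∈ _)
          simp [hem0] at this
      have := Finset.card_lt_card hss
      omega
    have hcirc' : IsCirc s t d' := by
      intro v
      have h1 : flowTo t d' v = flowTo t d v - lam * flowTo t (fun e => (χ₀ e : ℚ)) v := by
        rw [flowTo, flowTo, flowTo, Finset.mul_sum, ← Finset.sum_sub_distrib]
        refine Finset.sum_congr rfl fun e _ => by by_cases h : t e = v <;> simp [h, hd']
      have h2 : flowTo s d' v = flowTo s d v - lam * flowTo s (fun e => (χ₀ e : ℚ)) v := by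
        rw [flowTo, flowTo, flowTo, Finset.mul_sum, ← Finset.sum_sub_distrib]
        refine Finset.sum_congr rfl fun e _ => by by_cases h : s e = v <;> simp [h, hd']
      rw [h1, h2, hcirc v, hχ₀circ v]
    have hcost' : costQ γ d' < 0 := by
      have : costQ γ d' = costQ γ d - lam * costQ γ (fun e => (χ₀ e : ℚ)) := by
        rw [costQ, costQ, costQ, Finset.mul_sum, ← Finset.sum_sub_distrib]
        exact Finset.sum_congr rfl fun e _ => by simp [hd']; ring
      rw [this]
      nlinarith
    obtain ⟨χ, hc1, hc2, hc3⟩ := ih d' hcard' hcirc' hcost'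
    refine ⟨χ, hc1, ?_, hc3⟩
    intro e
    rcases hc2 e with h | ⟨h1, h2⟩ | ⟨h1, h2⟩
    · exact Or.inl h
    · -- d' e > 0 → d e > 0
      refine Or.inr (Or.inl ⟨h1, ?_⟩)
      by_cases h : χ₀ e = 0
      · simpa [hd', h] using h2
      · rcases hχ₀sgn e with h' | ⟨_, h'⟩ | ⟨_, h'⟩
        · exact absurd h' h
        · exact h'
        · exfalso
          have := (hsub e h).2 h'
          linarith
    · refine Or.inr (Or.inr ⟨h1, ?_⟩)
      by_cases h : χ₀ e = 0
      · simpa [hd', h] using h2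
      · rcases hχ₀sgn e with h' | ⟨_, h'⟩ | ⟨_, h'⟩
        · exact absurd h' h
        · exfalso
          have := (hsub e h).1 h'
          linarith
        · exact h'

lemma flowTo_smulf (t : E → W) (a : ℚ) (z : E → ℚ) (v : W) :
    flowTo t (fun e => a * z e) v = a * flowTo t z v := by
  rw [flowTo, flowTo, Finset.mul_sum]
  refine Finset.sum_congr rfl fun e _ => by by_cases h : t e = v <;> simp [h]

lemma IsCirc.smulf {s t : E → W} {z : E → ℚ} (a : ℚ) (h : IsCirc s t z) :
    IsCirc s t (fun e => a * z e) := fun v => by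
  rw [flowTo_smulf, flowTo_smulf, h v]

lemma flowTo_sumf {ι : Type*} (t : E → W) (s' : Finset ι) (g : ι → E → ℚ) (v : W) :
    flowTo t (fun e => ∑ i ∈ s', g i e) v = ∑ i ∈ s', flowTo t (g i) v := by
  rw [flowTo]
  have h1 : ∀ e, (if t e = v then (∑ i ∈ s', g i e) else 0)
      = ∑ i ∈ s', if t e = v then g i e else 0 := by
    intro e
    by_cases h : t e = v <;> simp [h]
  rw [Finset.sum_congr rfl fun e _ => h1 e, Finset.sum_comm]
  exact Finset.sum_congr rfl fun i _ => rfl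

lemma IsCirc.sumf {ι : Type*} {s t : E → W} (s' : Finset ι) (g : ι → E → ℚ)
    (h : ∀ i ∈ s', IsCirc s t (g i)) : IsCirc s t (fun e => ∑ i ∈ s', g i e) := fun v => by
  rw [flowTo_sumf, flowTo_sumf]
  exact Finset.sum_congr rfl fun i hi => h i hi v

/-- feasibility : circulation above lower bounds -/
def Feas (s t : E → W) (l : E → ℤ) (z : E → ℚ) : Prop :=
  IsCirc s t z ∧ ∀ e, (l e : ℚ) ≤ z e

def costZ (γ : E → ℕ) (z : E → ℤ) : ℤ := ∑ e, (γ e : ℤ) * z e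

lemma costQ_cast (γ : E → ℕ) (z : E → ℤ) :
    costQ γ (fun e => (z e : ℚ)) = ((costZ γ z : ℤ) : ℚ) := by
  rw [costQ, costZ]
  push_cast
  rfl

theorem exists_integral_min (s t : E → W) (l : E → ℤ) (γ : E → ℕ)
    (z₀ : E → ℤ) (h₀ : Feas s t l (fun e => (z₀ e : ℚ))) :
    ∃ z : E → ℤ, Feas s t l (fun e => (z e : ℚ)) ∧
      ∀ z' : E → ℚ, Feas s t l z' → costQ γ (fun e => (z e : ℚ)) ≤ costQ γ z' := by
  set P : ℤ → Prop := fun n => ∃ z : E → ℤ, Feas s t l (fun e => (z e : ℚ)) ∧ costZ γ z = n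
    with hP
  have hbdd : ∃ b : ℤ, ∀ n : ℤ, P n → b ≤ n := by
    refine ⟨∑ e, (γ e : ℤ) * l e, fun n hn => ?_⟩
    obtain ⟨z, hz, rfl⟩ := hn
    refine Finset.sum_le_sum fun e _ => ?_
    have : (l e : ℚ) ≤ ((z e : ℤ) : ℚ) := hz.2 e
    have hle : l e ≤ z e := by exact_mod_cast this
    exact mul_le_mul_of_nonneg_left hle (Int.natCast_nonneg _)
  have hinh : ∃ n : ℤ, P n := ⟨costZ γ z₀, z₀, h₀, rfl⟩
  obtain ⟨m, ⟨z, hz, hzval⟩, hmin⟩ := Int.exists_least_of_bdd hbdd hinh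
  refine ⟨z, hz, fun z' hz' => ?_⟩
  by_contra hcon
  push_neg at hcon
  set d : E → ℚ := fun e => z' e - (z e : ℚ) with hd
  have hdcirc : IsCirc s t d := hz'.1.subf hz.1
  have hdcost : costQ γ d < 0 := by
    have : costQ γ d = costQ γ z' - costQ γ (fun e => (z e : ℚ)) := by
      rw [costQ, costQ, costQ, ← Finset.sum_sub_distrib]
      exact Finset.sum_congr rfl fun e _ => by rw [hd]; ring
    rw [this]
    linarith
  obtain ⟨χ, hχcirc, hχsgn, hχcost⟩ := exists_neg_cycle s t γ
    (Finset.univ.filter fun e => d e ≠ 0).card d le_rfl hdcirc hdcost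
  set z'' : E → ℤ := fun e => z e + χ e with hz''
  have hcast : (fun e => ((z'' e : ℤ) : ℚ)) = fun e => ((z e : ℚ) + (χ e : ℚ)) := by
    funext e
    rw [hz'']
    push_cast
    rfl
  have hfeas : Feas s t l (fun e => (z'' e : ℚ)) := by
    constructor
    · rw [hcast]
      exact hz.1.addf hχcirc
    · intro e
      rw [hcast]
      dsimp only
      rcases hχsgn e with h | ⟨h1, h2⟩ | ⟨h1, h2⟩
      · rw [h]; simpa using hz.2 e
      · rw [h1]; have := hz.2 e; push_cast; linarith
      · rw [h1]
        have hlt : z' e < (z e : ℚ) := by simp only [hd] at h2; linarith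
        have hle : (l e : ℚ) < (z e : ℚ) := lt_of_le_of_lt (hz'.2 e) hlt
        have : l e < z e := by exact_mod_cast hle
        push_cast
        have : (l e : ℚ) ≤ (z e : ℚ) - 1 := by
          have : l e ≤ z e - 1 := by omega
          exact_mod_cast this
        linarith
  have hneg : costZ γ z'' < m := by
    have h1 : costQ γ (fun e => (z'' e : ℚ)) =
        costQ γ (fun e => (z e : ℚ)) + costQ γ (fun e => (χ e : ℚ)) := by
      rw [hcast, costQ, costQ, costQ, ← Finset.sum_add_distrib]
      exact Finset.sum_congr rfl fun e _ => by ring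
    have h2 : costQ γ (fun e => (z'' e : ℚ)) < costQ γ (fun e => (z e : ℚ)) := by
      rw [h1]; linarith
    rw [costQ_cast, costQ_cast] at h2
    have : costZ γ z'' < costZ γ z := by exact_mod_cast h2
    omega
  exact absurd (hmin _ ⟨z'', hfeas, rfl⟩) (by omega)

end TDIcore

set_option linter.unusedSectionVars false

namespace TDIstmt15

open TDIcore

variable {V : Type*} [Fintype V]

/-- the split-graph edge type : real (non-loop) edges of `A`, plus one split
edge per node -/
abbrev Esub (A : Set (V × V)) := {e : V × V // e ∈ A ∧ e.1 ≠ e.2}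

abbrev Edg (A : Set (V × V)) := Esub A ⊕ V

variable {A : Set (V × V)}

def src : Edg A → V × Bool
  | .inl e => (e.1.1, true)
  | .inr v => (v, false)

def tgt : Edg A → V × Bool
  | .inl e => (e.1.2, false)
  | .inr v => (v, true)

def γc (c : V × V → ℕ) : Edg A → ℕ
  | .inl e => c e.1
  | .inr _ => 0

def lw (w : V → ℤ) : Edg A → ℤ
  | .inl _ => 0
  | .inr v => max (w v) 0

/-- characteristic flow of a di-circuit -/
def φ (K : DiCircuit A) : Edg A → ℕ
  | .inl e => if e.1 ∈ K.edges then 1 else 0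
  | .inr v => if v ∈ K.verts then 1 else 0

section DiCircuitFacts

variable (K : DiCircuit A)

lemma Kpos : NeZero K.n := ⟨by have := K.hn; omega⟩

lemma Kfact : Fact (1 < K.n) := ⟨K.hn⟩

omit [Fintype V] in
lemma sum_range_zmod {n : ℕ} [NeZero n] {M : Type*} [AddCommMonoid M] (g : ZMod n → M) :
    ∑ i ∈ Finset.range n, g (i : ZMod n) = ∑ x : ZMod n, g x := by
  refine Finset.sum_nbij' (fun i => (i : ZMod n)) (fun x => x.val) ?_ ?_ ?_ ?_ ?_
  · intro i _; exact Finset.mem_univ _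
  · intro x _; exact Finset.mem_range.mpr (ZMod.val_lt x)
  · intro i hi; exact ZMod.val_cast_of_lt (Finset.mem_range.mp hi)
  · intro x _; exact ZMod.natCast_rightInverse x
  · intro i _; rfl

lemma ne_succ (i : ZMod K.n) : i ≠ i + 1 := by
  haveI := Kfact K
  haveI := Kpos K
  intro h
  have h1 : (0 : ZMod K.n) = 1 := by
    have := add_right_cancel (a := i) (b := (0 : ZMod K.n)) (c := i + 1 - i)
    nth_rewrite 2 [h] at this
    simpa using congrArg (fun x => x - i) h
  exact one_ne_zero h1.symm

lemma edges_sub {p : V × V} (hp : p ∈ K.edges) : p ∈ A ∧ p.1 ≠ p.2 := by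
  obtain ⟨i, rfl⟩ := hp
  exact ⟨K.mem i, fun h => ne_succ K i (K.inj h)⟩

lemma into_unique {j : ZMod K.n} (p : V × V) :
    (p ∈ K.edges ∧ p.2 = K.f j) ↔ p = (K.f (j - 1), K.f j) := by
  constructor
  · rintro ⟨⟨i, rfl⟩, h2⟩
    have hij : i + 1 = j := K.inj h2
    have : i = j - 1 := by rw [← hij]; ring
    subst this
    simp [hij]
  · rintro rfl
    exact ⟨⟨j - 1, by rw [sub_add_cancel]⟩, rfl⟩

lemma out_unique {j : ZMod K.n} (p : V × V) :
    (p ∈ K.edges ∧ p.1 = K.f j) ↔ p = (K.f j, K.f (j + 1)) := by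
  constructor
  · rintro ⟨⟨i, rfl⟩, h2⟩
    have hij : i = j := K.inj h2
    subst hij
    rfl
  · rintro rfl
    exact ⟨⟨j, rfl⟩, rfl⟩

lemma into_none {v : V} (hv : v ∉ K.verts) (p : V × V) : ¬(p ∈ K.edges ∧ p.2 = v) := by
  rintro ⟨⟨i, rfl⟩, h2⟩
  exact hv ⟨i + 1, h2⟩

lemma out_none {v : V} (hv : v ∉ K.verts) (p : V × V) : ¬(p ∈ K.edges ∧ p.1 = v) := by
  rintro ⟨⟨i, rfl⟩, h2⟩
  exact hv ⟨i, h2⟩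

end DiCircuitFacts

/-! flow computations on the split graph -/

lemma flow_in_false (q : Edg A → ℚ) (v : V) :
    flowTo tgt q (v, false) = ∑ a : Esub A, if a.1.2 = v then q (Sum.inl a) else 0 := by
  simp [flowTo, Fintype.sum_sum_type, tgt, Prod.ext_iff]

lemma flow_out_false (q : Edg A → ℚ) (v : V) :
    flowTo src q (v, false) = q (Sum.inr v) := by
  simp [flowTo, Fintype.sum_sum_type, src, Prod.ext_iff]

lemma flow_in_true (q : Edg A → ℚ) (v : V) :
    flowTo tgt q (v, true) = q (Sum.inr v) := by
  simp [flowTo, Fintype.sum_sum_type, tgt, Prod.ext_iff]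

lemma flow_out_true (q : Edg A → ℚ) (v : V) :
    flowTo src q (v, true) = ∑ a : Esub A, if a.1.1 = v then q (Sum.inl a) else 0 := by
  simp [flowTo, Fintype.sum_sum_type, src, Prod.ext_iff]

lemma phi_in_count (K : DiCircuit A) (v : V) :
    (∑ a : Esub A, if a.1.2 = v then ((φ K (Sum.inl a) : ℚ)) else 0)
      = if v ∈ K.verts then (1:ℚ) else 0 := by
  have hterm : ∀ a : Esub A, (if a.1.2 = v then ((φ K (Sum.inl a) : ℚ)) else 0)
      = if a.1 ∈ K.edges ∧ a.1.2 = v then (1:ℚ) else 0 := by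
    intro a
    by_cases h1 : a.1.2 = v <;> by_cases h2 : a.1 ∈ K.edges <;> simp [φ, h1, h2]
  refine (Finset.sum_congr rfl fun a _ => hterm a).trans ?_
  by_cases hv : v ∈ K.verts
  · obtain ⟨j, hj⟩ := hv
    have a₀mem : (K.f (j - 1), K.f j) ∈ K.edges := ⟨j - 1, by rw [sub_add_cancel]⟩
    set a₀ : Esub A := ⟨(K.f (j - 1), K.f j), edges_sub K a₀mem⟩ with ha₀
    have hcond : ∀ a : Esub A, (a.1 ∈ K.edges ∧ a.1.2 = v) ↔ a = a₀ := by
      intro a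
      rw [Subtype.ext_iff, ← hj]
      exact into_unique K a.1
    refine (Finset.sum_congr rfl fun a _ => if_congr (hcond a) rfl rfl).trans ?_
    rw [Finset.sum_ite_eq' Finset.univ a₀ fun _ => (1:ℚ), if_pos (Finset.mem_univ a₀),
      if_pos ⟨j, hj⟩]
  · rw [Finset.sum_eq_zero fun a _ => if_neg fun hh => into_none K hv a.1 hh, if_neg hv]

lemma phi_out_count (K : DiCircuit A) (v : V) :
    (∑ a : Esub A, if a.1.1 = v then ((φ K (Sum.inl a) : ℚ)) else 0)
      = if v ∈ K.verts then (1:ℚ) else 0 := by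
  have hterm : ∀ a : Esub A, (if a.1.1 = v then ((φ K (Sum.inl a) : ℚ)) else 0)
      = if a.1 ∈ K.edges ∧ a.1.1 = v then (1:ℚ) else 0 := by
    intro a
    by_cases h1 : a.1.1 = v <;> by_cases h2 : a.1 ∈ K.edges <;> simp [φ, h1, h2]
  refine (Finset.sum_congr rfl fun a _ => hterm a).trans ?_
  by_cases hv : v ∈ K.verts
  · obtain ⟨j, hj⟩ := hv
    have a₀mem : (K.f j, K.f (j + 1)) ∈ K.edges := ⟨j, rfl⟩
    set a₀ : Esub A := ⟨(K.f j, K.f (j + 1)), edges_sub K a₀mem⟩ with ha₀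
    have hcond : ∀ a : Esub A, (a.1 ∈ K.edges ∧ a.1.1 = v) ↔ a = a₀ := by
      intro a
      rw [Subtype.ext_iff, ← hj]
      exact out_unique K a.1
    refine (Finset.sum_congr rfl fun a _ => if_congr (hcond a) rfl rfl).trans ?_
    rw [Finset.sum_ite_eq' Finset.univ a₀ fun _ => (1:ℚ), if_pos (Finset.mem_univ a₀),
      if_pos ⟨j, hj⟩]
  · rw [Finset.sum_eq_zero fun a _ => if_neg fun hh => out_none K hv a.1 hh, if_neg hv]

/-- `φ K` is a circulation -/
lemma phi_circ (K : DiCircuit A) : IsCirc src tgt (fun e => (φ K e : ℚ)) := by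
  rintro ⟨v, b⟩
  cases b
  · rw [flow_in_false, flow_out_false, phi_in_count]
    by_cases hv : v ∈ K.verts <;> simp [φ, hv]
  · rw [flow_in_true, flow_out_true, phi_out_count]
    by_cases hv : v ∈ K.verts <;> simp [φ, hv]

/-- cost of `φ K` -/
lemma phi_cost (c : V × V → ℕ) (K : DiCircuit A) :
    costQ (γc c) (fun e => (φ K e : ℚ)) = (K.cost c : ℚ) := by
  haveI := Kpos K
  rw [costQ, Fintype.sum_sum_type]
  have h2 : ∑ u : V, ((γc c (Sum.inr u : Edg A) : ℚ)) * (φ K (Sum.inr u) : ℚ) = 0 :=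
    Finset.sum_eq_zero fun u _ => by simp [γc]
  rw [h2, add_zero]
  have hterm : ∀ a : Esub A, ((γc c (Sum.inl a : Edg A) : ℚ)) * (φ K (Sum.inl a) : ℚ)
      = if a.1 ∈ K.edges then ((c a.1 : ℚ)) else 0 := by
    intro a
    by_cases h : a.1 ∈ K.edges <;> simp [γc, φ, h]
  rw [Finset.sum_congr rfl fun a _ => hterm a, ← Finset.sum_filter]
  -- the filter is the image of the edge map
  set g : ZMod K.n → Esub A := fun i => ⟨(K.f i, K.f (i + 1)), edges_sub K ⟨i, rfl⟩⟩ with hg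
  have hginj : Function.Injective g := by
    intro i j hij
    rw [Subtype.ext_iff, Prod.ext_iff] at hij
    exact K.inj hij.1
  have himg : Finset.univ.filter (fun a : Esub A => a.1 ∈ K.edges)
      = Finset.image g Finset.univ := by
    ext a
    simp only [Finset.mem_filter, Finset.mem_univ, true_and, Finset.mem_image]
    constructor
    · rintro ⟨i, hi⟩
      exact ⟨i, Subtype.ext hi.symm⟩
    · rintro ⟨i, rfl⟩
      exact ⟨i, rfl⟩
  rw [himg, Finset.sum_image fun i _ j _ h => hginj h]
  have : ∀ i : ZMod K.n, ((c (g i).1 : ℚ)) = (c (K.f i, K.f (i + 1)) : ℚ) := fun i => rfl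
  rw [Finset.sum_congr rfl fun i _ => this i]
  rw [DiCircuit.cost]
  push_cast
  rw [sum_range_zmod (fun x : ZMod K.n => (c (K.f x, K.f (x + 1)) : ℚ))]

/-- the flow on original edges, as a function on all pairs -/
def zg (z : Edg A → ℕ) (p : V × V) : ℕ :=
  if h : p ∈ A ∧ p.1 ≠ p.2 then z (Sum.inl ⟨p, h⟩) else 0

lemma zg_inl (z : Edg A → ℕ) (a : Esub A) : zg z a.1 = z (Sum.inl a) := by
  rw [zg, dif_pos a.2]

lemma zg_pos {z : Edg A → ℕ} {q : V × V} (h : 0 < zg z q) : q ∈ A ∧ q.1 ≠ q.2 := by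
  by_contra hq
  rw [zg, dif_neg hq] at h
  exact lt_irrefl 0 h

lemma zg_zero {z : Edg A → ℕ} {q : V × V} (hq : ¬(q ∈ A ∧ q.1 ≠ q.2)) : zg z q = 0 := by
  rw [zg, dif_neg hq]

lemma sum_esub_eq (G : V × V → ℚ) (hG : ∀ p : V × V, ¬(p ∈ A ∧ p.1 ≠ p.2) → G p = 0) :
    ∑ a : Esub A, G a.1 = ∑ p : V × V, G p := by
  have h1 : ∑ p ∈ Finset.univ.filter (fun p : V × V => p ∈ A ∧ p.1 ≠ p.2), G p
      = ∑ a : Esub A, G a.1 :=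
    Finset.sum_subtype (Finset.univ.filter fun p : V × V => p ∈ A ∧ p.1 ≠ p.2)
      (fun p => by simp) G
  rw [← h1]
  exact Finset.sum_subset (Finset.filter_subset _ _)
    (fun p _ hp => hG p (by simpa using hp))

lemma cons_in {z : Edg A → ℕ} (hc : IsCirc src tgt (fun e => (z e : ℚ))) (v : V) :
    ∑ u : V, ((zg z (u, v) : ℚ)) = (z (Sum.inr v) : ℚ) := by
  have h := hc (v, false)
  rw [flow_in_false, flow_out_false] at h
  rw [← h]
  have h1 : ∀ a : Esub A, (if a.1.2 = v then ((z (Sum.inl a) : ℚ)) else 0)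
      = if a.1.2 = v then ((zg z a.1 : ℚ)) else 0 := by
    intro a
    rw [zg_inl]
  refine Eq.symm ((Finset.sum_congr rfl fun a _ => h1 a).trans ?_)
  refine (sum_esub_eq (fun p : V × V => if p.2 = v then ((zg z p : ℚ)) else 0)
    (fun p hp => by rw [zg_zero hp]; simp)).trans ?_
  rw [Fintype.sum_prod_type]
  refine Finset.sum_congr rfl fun u _ => ?_
  rw [Finset.sum_ite_eq' Finset.univ v fun y => ((zg z (u, y) : ℚ))]
  simp

lemma cons_out {z : Edg A → ℕ} (hc : IsCirc src tgt (fun e => (z e : ℚ))) (v : V) :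
    ∑ u : V, ((zg z (v, u) : ℚ)) = (z (Sum.inr v) : ℚ) := by
  have h := hc (v, true)
  rw [flow_in_true, flow_out_true] at h
  rw [h]
  have h1 : ∀ a : Esub A, (if a.1.1 = v then ((z (Sum.inl a) : ℚ)) else 0)
      = if a.1.1 = v then ((zg z a.1 : ℚ)) else 0 := by
    intro a
    rw [zg_inl]
  refine Eq.symm ((Finset.sum_congr rfl fun a _ => h1 a).trans ?_)
  refine (sum_esub_eq (fun p : V × V => if p.1 = v then ((zg z p : ℚ)) else 0)
    (fun p hp => by rw [zg_zero hp]; simp)).trans ?_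
  rw [Fintype.sum_prod_type]
  have hpull : ∀ x : V, (∑ y : V, if x = v then ((zg z (x, y) : ℚ)) else 0)
      = if x = v then (∑ y : V, ((zg z (x, y) : ℚ))) else 0 := by
    intro x
    by_cases hx : x = v <;> simp [hx]
  rw [Finset.sum_congr rfl fun x _ => hpull x,
    Finset.sum_ite_eq' Finset.univ v fun x => ∑ y : V, ((zg z (x, y) : ℚ)),
    if_pos (Finset.mem_univ v)]

/-- decomposition of a nonnegative integral circulation into di-circuits -/
lemma decomp : ∀ (N : ℕ) (z : Edg A → ℕ), (∑ e, z e) ≤ N →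
    IsCirc src tgt (fun e => (z e : ℚ)) →
    ∃ y : DiCircuit A →₀ ℕ, ∀ e, z e = y.sum fun K a => a * φ K e := by
  intro N
  induction N with
  | zero =>
    intro z hN _
    have hz0 : ∀ e, z e = 0 := fun e =>
      Finset.sum_eq_zero_iff.mp (Nat.le_zero.mp hN) e (Finset.mem_univ e)
    exact ⟨0, fun e => by rw [hz0 e, Finsupp.sum_zero_index]⟩
  | succ N ih =>
    intro z hN hc
    by_cases hz0 : ∀ e, z e = 0
    · exact ⟨0, fun e => by rw [hz0 e, Finsupp.sum_zero_index]⟩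
    push_neg at hz0
    obtain ⟨e₁, he₁⟩ := hz0
    have hinr : ∀ v : V, (∃ u, 0 < zg z (u, v)) → 0 < z (Sum.inr v) := by
      rintro v ⟨u, hu⟩
      have h := cons_in hc v
      have hterm : (0:ℚ) < ((zg z (u, v) : ℚ)) := by exact_mod_cast hu
      have hlt : (0:ℚ) < ∑ u : V, ((zg z (u, v) : ℚ)) :=
        lt_of_lt_of_le hterm (Finset.single_le_sum
          (f := fun u => ((zg z (u, v) : ℚ))) (fun u _ => by positivity) (Finset.mem_univ u))
      rw [h] at hlt
      exact_mod_cast hlt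
    have hinr' : ∀ v u, 0 < zg z (v, u) → 0 < z (Sum.inr v) := by
      intro v u hu
      have h := cons_out hc v
      have hterm : (0:ℚ) < ((zg z (v, u) : ℚ)) := by exact_mod_cast hu
      have hlt : (0:ℚ) < ∑ u : V, ((zg z (v, u) : ℚ)) :=
        lt_of_lt_of_le hterm (Finset.single_le_sum
          (f := fun u => ((zg z (v, u) : ℚ))) (fun u _ => by positivity) (Finset.mem_univ u))
      rw [h] at hlt
      exact_mod_cast hlt
    have hout : ∀ v : V, 0 < z (Sum.inr v) → ∃ u, 0 < zg z (v, u) := by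
      intro v hv
      by_contra hno
      push_neg at hno
      have h := cons_out hc v
      have hz : ∀ u, zg z (v, u) = 0 := fun u => Nat.le_zero.mp (hno u)
      rw [Finset.sum_eq_zero (fun u _ => by rw [hz u]; norm_num)] at h
      have : z (Sum.inr v) = 0 := by exact_mod_cast h.symm
      omega
    have hexa : ∃ a : Esub A, 0 < z (Sum.inl a) := by
      by_contra hno
      push_neg at hno
      have hinl0 : ∀ a : Esub A, z (Sum.inl a) = 0 := fun a => Nat.le_zero.mp (hno a)
      have hzg0 : ∀ q, zg z q = 0 := by
        intro q
        by_cases hq : q ∈ A ∧ q.1 ≠ q.2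
        · rw [zg, dif_pos hq]; exact hinl0 _
        · exact zg_zero hq
      have hinr0 : ∀ v, z (Sum.inr v) = 0 := by
        intro v
        have h := cons_out hc v
        rw [Finset.sum_eq_zero (fun u _ => by rw [hzg0 (v, u)]; norm_num)] at h
        exact_mod_cast h.symm
      cases e₁ with
      | inl a => exact he₁ (hinl0 a)
      | inr v => exact he₁ (hinr0 v)
    obtain ⟨a₁, ha₁⟩ := hexa
    have hstep0 : ∀ v : V, ∃ u, (∃ u', 0 < zg z (u', v)) → 0 < zg z (v, u) := by
      intro v
      by_cases h : ∃ u', 0 < zg z (u', v)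
      · obtain ⟨u, hu⟩ := hout v (hinr v h)
        exact ⟨u, fun _ => hu⟩
      · exact ⟨v, fun h' => absurd h' h⟩
    choose nx hnx using hstep0
    set p : ℕ → V := fun n => Nat.rec a₁.1.2 (fun _ v => nx v) n with hp
    have hp0 : p 0 = a₁.1.2 := rfl
    have hpsucc : ∀ n, p (n + 1) = nx (p n) := fun n => rfl
    have haz : 0 < zg z a₁.1 := by rw [zg_inl]; exact ha₁
    have hInv : ∀ n, ∃ u', 0 < zg z (u', p n) := by
      intro n
      induction n with
      | zero => exact ⟨a₁.1.1, haz⟩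
      | succ n ihn => exact ⟨p n, hnx (p n) ihn⟩
    have hstz : ∀ n, 0 < zg z (p n, p (n + 1)) := fun n => hnx (p n) (hInv n)
    have hne : ∀ n, p n ≠ p (n + 1) := fun n => (zg_pos (hstz n)).2
    obtain ⟨i, j, hij, hpij, hinj⟩ := exists_first_repeat p (Set.toFinite _)
    have hn2 : 2 ≤ j - i := by
      rcases Nat.lt_or_ge (i + 1) j with h | h
      · omega
      · exfalso
        have hji : j = i + 1 := by omega
        rw [hji] at hpij
        exact hne i hpij
    set nK := j - i with hnK
    haveI : NeZero nK := ⟨by omega⟩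
    haveI : Fact (1 < nK) := ⟨by omega⟩
    set f : ZMod nK → V := fun k => p (i + k.val) with hf
    have hfstep : ∀ k : ZMod nK, f (k + 1) = p (i + k.val + 1) := by
      intro k
      show p (i + (k + 1).val) = p (i + k.val + 1)
      have hklt := ZMod.val_lt k
      rcases Nat.lt_or_ge (k.val + 1) nK with hlt | hge
      · have hval2 : (k + 1).val = k.val + 1 := by
          rw [ZMod.val_add, ZMod.val_one]
          exact Nat.mod_eq_of_lt hlt
        rw [hval2]
        exact congrArg p (Nat.add_assoc i k.val 1).symm
      · have heq : k.val + 1 = nK := by omega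
        have hval2 : (k + 1).val = 0 := by
          rw [ZMod.val_add, ZMod.val_one, heq, Nat.mod_self]
        rw [hval2]
        have hj : i + k.val + 1 = j := by omega
        rw [hj]
        simpa using hpij
    have hKmem : ∀ k : ZMod nK, (f k, f (k + 1)) ∈ A := by
      intro k
      rw [hfstep k]
      exact (zg_pos (hstz (i + k.val))).1
    have hKinj : Function.Injective f := by
      intro k k' hkk
      have h1 := ZMod.val_lt k
      have h2 := ZMod.val_lt k'
      rcases lt_trichotomy k.val k'.val with hlt | heq | hgt
      · exact absurd hkk (hinj (i + k.val) (i + k'.val) (by omega) (by omega))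
      · exact ZMod.val_injective _ heq
      · exact absurd hkk.symm (hinj (i + k'.val) (i + k.val) (by omega) (by omega))
    set K : DiCircuit A := ⟨nK, by omega, f, hKinj, hKmem⟩ with hK
    have hKedge : ∀ q, q ∈ K.edges → 0 < zg z q := by
      rintro q ⟨k, rfl⟩
      have hpair : (K.f k, K.f (k + 1)) = (p (i + k.val), p (i + k.val + 1)) := by
        show (f k, f (k + 1)) = _
        rw [hfstep k]
      rw [hpair]
      exact hstz (i + k.val)
    have hKvert : ∀ v, v ∈ K.verts → 0 < z (Sum.inr v) := by
      rintro v ⟨k, rfl⟩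
      exact hinr' _ _ (hstz (i + k.val))
    have hφle : ∀ e, φ K e ≤ z e := by
      intro e
      cases e with
      | inl a =>
        by_cases h : a.1 ∈ K.edges
        · have h2 : 0 < z (Sum.inl a) := by rw [← zg_inl z a]; exact hKedge a.1 h
          simp only [φ, if_pos h]
          omega
        · simp [φ, h]
      | inr v =>
        by_cases h : v ∈ K.verts
        · have h2 := hKvert v h
          simp only [φ, if_pos h]
          omega
        · simp [φ, h]
    set z' : Edg A → ℕ := fun e => z e - φ K e with hz'
    have hzz : ∀ e, z e = z' e + φ K e := fun e => (Nat.sub_add_cancel (hφle e)).symm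
    have hcast : (fun e => (z' e : ℚ)) = fun e => (z e : ℚ) - (φ K e : ℚ) := by
      funext e
      show ((z e - φ K e : ℕ) : ℚ) = _
      rw [Nat.cast_sub (hφle e)]
    have hc' : IsCirc src tgt (fun e => (z' e : ℚ)) := by
      rw [hcast]
      exact hc.subf (phi_circ K)
    have hsum : ∑ e, z' e ≤ N := by
      have h1 : ∑ e, z e = ∑ e, z' e + ∑ e, φ K e := by
        rw [← Finset.sum_add_distrib]
        exact Finset.sum_congr rfl fun e _ => hzz e
      have h2 : 0 < ∑ e, φ K e := by
        have h3 : φ K (Sum.inr (K.f 0) : Edg A) = 1 := if_pos ⟨0, rfl⟩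
        have h4 : φ K (Sum.inr (K.f 0) : Edg A) ≤ ∑ e, φ K e :=
          Finset.single_le_sum (f := fun e => φ K e) (fun _ _ => Nat.zero_le _)
            (Finset.mem_univ (Sum.inr (K.f 0) : Edg A))
        omega
      omega
    obtain ⟨y', hy'⟩ := ih z' hsum hc'
    refine ⟨y' + Finsupp.single K 1, fun e => ?_⟩
    rw [Finsupp.sum_add_index' (fun k => zero_mul (φ k e)) (fun k a b => add_mul a b (φ k e)),
      Finsupp.sum_single_index (zero_mul (φ K e)), one_mul, ← hy' e, ← hzz e]

end TDIstmt15

/-- the system `{Qx ≤ c̃, x ≥ 0}` is totally dual integral,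
where `Q` is the di-circuits versus nodes incidence matrix: for every integral
objective `w` whose maximum over the primal polyhedron is attained, the dual
program has an integral optimal solution. -/
theorem stmt15 [Fintype V] (A : Set (V × V)) (c : V × V → ℕ) (w : V → ℤ)
    (hmax : ∃ x : V → ℚ,
      ((∀ v, 0 ≤ x v) ∧
        ∀ K : DiCircuit A,
          (∑ i ∈ Finset.range K.n, x (K.f (i : ZMod K.n))) ≤ (K.cost c : ℚ)) ∧
      ∀ x' : V → ℚ,
        ((∀ v, 0 ≤ x' v) ∧
          ∀ K : DiCircuit A,
            (∑ i ∈ Finset.range K.n, x' (K.f (i : ZMod K.n))) ≤ (K.cost c : ℚ)) →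
        (∑ v, (w v : ℚ) * x' v) ≤ ∑ v, (w v : ℚ) * x v) :
    ∃ y : DiCircuit A →₀ ℕ,
      (∀ v, (w v : ℚ) ≤ y.sum fun K a => K.verts.indicator (fun _ => (a : ℚ)) v) ∧
      ∀ y' : DiCircuit A →₀ ℚ, (∀ K, 0 ≤ y' K) →
        (∀ v, (w v : ℚ) ≤ y'.sum fun K a => K.verts.indicator (fun _ => a) v) →
        (y.sum fun K a => (a : ℚ) * K.cost c) ≤
          y'.sum fun K a => a * K.cost c := by
  classical
  open TDIcore TDIstmt15 in
  obtain ⟨x, ⟨hx0, hxK⟩, hopt⟩ := hmax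
  have hWK : ∀ v : V, 0 < w v → ∃ K : DiCircuit A, v ∈ K.verts := by
    intro v hv
    by_contra hno
    push_neg at hno
    set x' : V → ℚ := fun u => x u + if u = v then 1 else 0 with hx'
    have hfeas : (∀ u, 0 ≤ x' u) ∧ ∀ K : DiCircuit A,
        (∑ i ∈ Finset.range K.n, x' (K.f (i : ZMod K.n))) ≤ (K.cost c : ℚ) := by
      constructor
      · intro u
        rw [hx']
        dsimp only
        by_cases h : u = v
        · simp only [if_pos h]
          linarith [hx0 u]
        · simp only [if_neg h, add_zero]
          exact hx0 u
      · intro K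
        have heq : ∀ i ∈ Finset.range K.n, x' (K.f (i : ZMod K.n)) = x (K.f (i : ZMod K.n)) := by
          intro i _
          rw [hx']
          dsimp only
          rw [if_neg, add_zero]
          intro h
          exact hno K ⟨(i : ZMod K.n), h⟩
        rw [Finset.sum_congr rfl heq]
        exact hxK K
    have hobj := hopt x' hfeas
    have hsum : ∑ u, (w u : ℚ) * x' u = (∑ u, (w u : ℚ) * x u) + (w v : ℚ) := by
      have hterm : ∀ u ∈ Finset.univ, (w u : ℚ) * x' u
          = (w u : ℚ) * x u + if u = v then ((w u : ℚ)) else 0 := by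
        intro u _
        rw [hx']
        dsimp only
        by_cases h : u = v <;> simp [h] <;> ring
      rw [Finset.sum_congr rfl hterm, Finset.sum_add_distrib,
        Finset.sum_ite_eq' Finset.univ v fun u => ((w u : ℚ)), if_pos (Finset.mem_univ v)]
    rw [hsum] at hobj
    have : (0:ℚ) < (w v : ℚ) := by exact_mod_cast hv
    linarith
  by_cases hD : Nonempty (DiCircuit A)
  · -- main case
    have hKc : ∀ v : V, ∃ K : DiCircuit A, 0 < w v → v ∈ K.verts := by
      intro v
      by_cases h : 0 < w v
      · obtain ⟨K, hK⟩ := hWK v h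
        exact ⟨K, fun _ => hK⟩
      · exact ⟨hD.some, fun h' => absurd h' h⟩
    choose Kv hKv using hKc
    set coef : V → ℕ := fun v => if 0 < w v then (w v).toNat else 0 with hcoef
    set z₀ : Edg A → ℕ := fun e => ∑ v, coef v * φ (Kv v) e with hz₀
    set z₀ℤ : Edg A → ℤ := fun e => (z₀ e : ℤ) with hz₀ℤ
    have h₀ : Feas src tgt (lw w) (fun e => (z₀ℤ e : ℚ)) := by
      constructor
      · have hEq : (fun e => (z₀ℤ e : ℚ))
            = fun e => ∑ v ∈ Finset.univ, (fun v e => ((coef v : ℚ)) * ((φ (Kv v) e : ℚ))) v e := by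
          funext e
          show ((z₀ e : ℤ) : ℚ) = _
          rw [hz₀]
          push_cast
          rfl
        rw [hEq]
        exact IsCirc.sumf Finset.univ _ fun v _ => (phi_circ (Kv v)).smulf (coef v)
      · intro e
        cases e with
        | inl a =>
          show ((lw w (Sum.inl a) : ℤ) : ℚ) ≤ ((z₀ (Sum.inl a) : ℤ) : ℚ)
          have hl : lw w (Sum.inl a : Edg A) = 0 := rfl
          rw [hl]
          push_cast
          positivity
        | inr v =>
          show ((lw w (Sum.inr v) : ℤ) : ℚ) ≤ ((z₀ (Sum.inr v) : ℤ) : ℚ)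
          have hl : lw w (Sum.inr v : Edg A) = max (w v) 0 := rfl
          rw [hl]
          by_cases h : 0 < w v
          · have h1 : coef v * φ (Kv v) (Sum.inr v : Edg A) ≤ z₀ (Sum.inr v) := by
              rw [hz₀]
              exact Finset.single_le_sum (f := fun u => coef u * φ (Kv u) (Sum.inr v : Edg A))
                (fun _ _ => Nat.zero_le _) (Finset.mem_univ v)
            have h2 : φ (Kv v) (Sum.inr v : Edg A) = 1 := if_pos (hKv v h)
            have h3 : coef v = (w v).toNat := if_pos h
            have h4 : (w v).toNat ≤ z₀ (Sum.inr v) := by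
              rw [h2, mul_one, h3] at h1
              exact h1
            have h5 : max (w v) 0 = ((w v).toNat : ℤ) := (Int.toNat_eq_max (w v)).symm ▸ rfl
            rw [show max (w v) 0 = ((w v).toNat : ℤ) from (Int.toNat_eq_max (w v)).symm]
            exact_mod_cast h4
          · rw [max_eq_right (by omega : w v ≤ 0)]
            push_cast
            positivity
    obtain ⟨zm, hzm, hzmin⟩ := exists_integral_min src tgt (lw w) (γc c) z₀ℤ h₀
    have hzm0 : ∀ e, 0 ≤ zm e := by
      intro e
      have h1 : ((lw w e : ℤ) : ℚ) ≤ ((zm e : ℤ) : ℚ) := hzm.2 e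
      have h2 : (0 : ℤ) ≤ lw w e := by
        cases e with
        | inl a => exact le_refl 0
        | inr v => exact le_max_right _ _
      have h3 : lw w e ≤ zm e := by exact_mod_cast h1
      omega
    set zN : Edg A → ℕ := fun e => (zm e).toNat with hzN
    have hzNcast : ∀ e, ((zN e : ℕ) : ℚ) = ((zm e : ℤ) : ℚ) := by
      intro e
      have : ((zm e).toNat : ℤ) = zm e := Int.toNat_of_nonneg (hzm0 e)
      exact_mod_cast this
    have hcN : IsCirc src tgt (fun e => (zN e : ℚ)) := by
      have hEq : (fun e => ((zN e : ℕ) : ℚ)) = fun e => ((zm e : ℤ) : ℚ) := funext hzNcast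
      rw [hEq]
      exact hzm.1
    obtain ⟨y, hy⟩ := decomp (∑ e, zN e) zN le_rfl hcN
    refine ⟨y, ?_, ?_⟩
    · intro v
      have h1 : (y.sum fun K a => K.verts.indicator (fun _ => (a : ℚ)) v)
          = ((y.sum fun K a => a * φ K (Sum.inr v : Edg A) : ℕ) : ℚ) := by
        show (∑ K ∈ y.support, K.verts.indicator (fun _ => ((y K : ℚ))) v)
            = ((∑ K ∈ y.support, y K * φ K (Sum.inr v : Edg A) : ℕ) : ℚ)
        rw [Nat.cast_sum]
        refine Finset.sum_congr rfl fun K _ => ?_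
        by_cases h : v ∈ K.verts
        · rw [Set.indicator_of_mem h]
          have hφ : φ K (Sum.inr v : Edg A) = 1 := if_pos h
          rw [hφ]
          push_cast
          ring
        · rw [Set.indicator_of_notMem h]
          have hφ : φ K (Sum.inr v : Edg A) = 0 := if_neg h
          rw [hφ]
          push_cast
          ring
      rw [h1, ← hy (Sum.inr v), hzNcast (Sum.inr v)]
      have h2 : ((lw w (Sum.inr v : Edg A) : ℤ) : ℚ) ≤ ((zm (Sum.inr v) : ℤ) : ℚ) :=
        hzm.2 (Sum.inr v)
      have h3 : (w v : ℚ) ≤ ((lw w (Sum.inr v : Edg A) : ℤ) : ℚ) := by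
        have h4 : w v ≤ lw w (Sum.inr v : Edg A) := le_max_left _ _
        exact_mod_cast h4
      linarith
    · intro y' hy'0 hy'feas
      set q : Edg A → ℚ := fun e => y'.sum fun K a => a * ((φ K e : ℚ)) with hq
      have hqn : ∀ e, 0 ≤ q e :=
        fun e => Finset.sum_nonneg fun K _ => mul_nonneg (hy'0 K) (by positivity)
      have hqfeas : Feas src tgt (lw w) q := by
        constructor
        · have hEq : q = fun e => ∑ K ∈ y'.support, (fun K e => (y' K) * ((φ K e : ℚ))) K e := rfl
          rw [hEq]
          exact IsCirc.sumf _ _ fun K _ => (phi_circ K).smulf (y' K)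
        · intro e
          cases e with
          | inl a =>
            show ((lw w (Sum.inl a) : ℤ) : ℚ) ≤ q (Sum.inl a)
            have hl : lw w (Sum.inl a : Edg A) = 0 := rfl
            rw [hl]
            simpa using hqn (Sum.inl a)
          | inr v =>
            have h2 : (y'.sum fun K a => K.verts.indicator (fun _ => a) v) = q (Sum.inr v) := by
              show (∑ K ∈ y'.support, K.verts.indicator (fun _ => y' K) v)
                  = ∑ K ∈ y'.support, (y' K) * ((φ K (Sum.inr v : Edg A) : ℚ))
              refine Finset.sum_congr rfl fun K _ => ?_
              by_cases h : v ∈ K.verts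
              · rw [Set.indicator_of_mem h]
                have hφ : φ K (Sum.inr v : Edg A) = 1 := if_pos h
                rw [hφ]
                push_cast
                ring
              · rw [Set.indicator_of_notMem h]
                have hφ : φ K (Sum.inr v : Edg A) = 0 := if_neg h
                rw [hφ]
                push_cast
                ring
            show ((lw w (Sum.inr v) : ℤ) : ℚ) ≤ q (Sum.inr v)
            have hl : lw w (Sum.inr v : Edg A) = max (w v) 0 := rfl
            rw [hl, Int.cast_max]
            refine max_le ?_ (by simpa using hqn (Sum.inr v))
            rw [← h2]
            exact hy'feas v
      have hmin := hzmin q hqfeas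
      have hL : costQ (γc c) (fun e => ((zm e : ℤ) : ℚ)) = y.sum fun K a => (a : ℚ) * ((K.cost c : ℚ)) := by
        have hL1 : (fun e => ((zm e : ℤ) : ℚ)) = fun e => ((zN e : ℕ) : ℚ) :=
          funext fun e => (hzNcast e).symm
        rw [hL1, costQ]
        calc ∑ e, ((γc c e : ℚ)) * ((zN e : ℚ))
            = ∑ e, ∑ K ∈ y.support, (y K : ℚ) * (((γc c e : ℚ)) * ((φ K e : ℚ))) := by
              refine Finset.sum_congr rfl fun e _ => ?_
              rw [hy e]
              show ((γc c e : ℚ)) * ((∑ K ∈ y.support, y K * φ K e : ℕ) : ℚ) = _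
              push_cast
              rw [Finset.mul_sum]
              exact Finset.sum_congr rfl fun K _ => by ring
          _ = ∑ K ∈ y.support, (y K : ℚ) * ∑ e, ((γc c e : ℚ)) * ((φ K e : ℚ)) := by
              rw [Finset.sum_comm]
              exact Finset.sum_congr rfl fun K _ => by rw [Finset.mul_sum]
          _ = y.sum fun K a => (a : ℚ) * ((K.cost c : ℚ)) := by
              refine Finset.sum_congr rfl fun K _ => ?_
              rw [show (∑ e, ((γc c e : ℚ)) * ((φ K e : ℚ))) = ((K.cost c : ℚ)) from phi_cost c K]
      have hR : costQ (γc c) q = y'.sum fun K a => a * ((K.cost c : ℚ)) := by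
        rw [costQ]
        calc ∑ e, ((γc c e : ℚ)) * q e
            = ∑ e, ∑ K ∈ y'.support, (y' K) * (((γc c e : ℚ)) * ((φ K e : ℚ))) := by
              refine Finset.sum_congr rfl fun e _ => ?_
              show ((γc c e : ℚ)) * (∑ K ∈ y'.support, (y' K) * ((φ K e : ℚ))) = _
              rw [Finset.mul_sum]
              exact Finset.sum_congr rfl fun K _ => by ring
          _ = ∑ K ∈ y'.support, (y' K) * ∑ e, ((γc c e : ℚ)) * ((φ K e : ℚ)) := by
              rw [Finset.sum_comm]
              exact Finset.sum_congr rfl fun K _ => by rw [Finset.mul_sum]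
          _ = y'.sum fun K a => a * ((K.cost c : ℚ)) := by
              refine Finset.sum_congr rfl fun K _ => ?_
              rw [show (∑ e, ((γc c e : ℚ)) * ((φ K e : ℚ))) = ((K.cost c : ℚ)) from phi_cost c K]
      rw [hL, hR] at hmin
      exact hmin
  · -- no di-circuit at all
    refine ⟨0, fun v => ?_, fun y' hy'0 hy'feas => ?_⟩
    · rw [Finsupp.sum_zero_index]
      have h1 : ¬ 0 < w v := fun h => hD ⟨(hWK v h).choose⟩
      have h2 : w v ≤ 0 := by omega
      exact_mod_cast h2
    · rw [Finsupp.sum_zero_index]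
      exact Finset.sum_nonneg fun K _ => mul_nonneg (hy'0 K) (by positivity)
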